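/- Under the recursion ε₂ = 3ε + ε² and ε_{K+1} = 2ε + ε_K + ε_K·ε for K ≥ 2, with 0 < ε and Kε < 1, one has ε_K ≤ f(K) := 2Σ_{i=1}^K (Kε)^i for all K ≥ 2. -/

import Mathlib

/-! `ε_K + 2` grows by the factor `1 + ε` at each step and `ε₂ + 2 ≤ 2(1 + ε)²`, so
`ε_K ≤ 2((1 + ε)^K - 1)`. Expanding binomially and using `K.choose i ≤ K^i` gives
`(1 + ε)^K - 1 ≤ ∑_{i=1}^K (Kε)^i`. -/

open Finset

theorem one_add_pow_le_one_add_sum_Icc_mul_pow {R : Type*} [CommSemiring R] [PartialOrder R]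
    [IsOrderedRing R] {x : R} (hx : 0 ≤ x) (n : ℕ) :
    (1 + x) ^ n ≤ 1 + ∑ i ∈ Icc 1 n, ((n : R) * x) ^ i := by
  have hsplit : (1 + x) ^ n = 1 + ∑ i ∈ Icc 1 n, (n.choose i : R) * x ^ i := by
    rw [add_comm, add_pow, range_eq_Ico, sum_eq_sum_Ico_succ_bot (by omega),
      ← Ico_add_one_right_eq_Icc]
    simp [mul_comm]
  rw [hsplit]
  gcongr with i
  rw [mul_pow]
  gcongr
  simpa using Nat.mono_cast (α := R) (Nat.choose_le_pow n i)

theorem le_two_mul_one_add_pow_sub_one {ε : ℝ} (hε : 0 ≤ ε) {e : ℕ → ℝ} {m : ℕ}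
    (hm : e m ≤ 2 * ((1 + ε) ^ m - 1))
    (hstep : ∀ K, m ≤ K → e (K + 1) = 2 * ε + e K + e K * ε) :
    ∀ K, m ≤ K → e K ≤ 2 * ((1 + ε) ^ K - 1) := by
  intro K hK
  induction K, hK using Nat.le_induction with
  | base => exact hm
  | succ K hK ih =>
    calc e (K + 1) = 2 * ε + e K * (1 + ε) := by rw [hstep K hK]; ring
      _ ≤ 2 * ε + 2 * ((1 + ε) ^ K - 1) * (1 + ε) := by gcongr
      _ = 2 * ((1 + ε) ^ (K + 1) - 1) := by ring

/-- The error recursion `ε₂ = 3ε + ε²`, `ε_{K+1} = 2ε + ε_K + ε_K ε` satisfies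
`ε_K ≤ 2 ∑_{i=1}^K (Kε)^i` whenever `Kε < 1`. -/
theorem stmt5 (ε : ℝ) (hε : 0 < ε) (e : ℕ → ℝ)
    (h2 : e 2 = 3 * ε + ε ^ 2)
    (hstep : ∀ K, 2 ≤ K → e (K + 1) = 2 * ε + e K + e K * ε) :
    ∀ K : ℕ, 2 ≤ K → (K:ℝ) * ε < 1 →
      e K ≤ 2 * ∑ i ∈ Finset.Icc 1 K, ((K:ℝ) * ε) ^ i := by
  intro K hK _
  have hbase : e 2 ≤ 2 * ((1 + ε) ^ 2 - 1) := by rw [h2]; nlinarith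
  calc e K ≤ 2 * ((1 + ε) ^ K - 1) := le_two_mul_one_add_pow_sub_one hε.le hbase hstep K hK
    _ ≤ 2 * ∑ i ∈ Icc 1 K, ((K : ℝ) * ε) ^ i := by
      linarith [one_add_pow_le_one_add_sum_Icc_mul_pow hε.le K]
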